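/- Let Φ(z,w) be the 7 × 4 complex matrix, defined for (z,w) ∈ 𝕋², with rows (−1/2, 1/2, 1/2, −1/2), (z̄ − 1, 0, 0, 0), (0, w̄ − 1, 0, 0), (z̄ − w̄, w̄ − z̄, 0, 0), (0, 0, z̄ − 1, 0), (0, 0, 0, w̄ − 1) and (0, 0, z̄ − w̄, w̄ − z̄). Then rank Φ(z,w) = 4 for every (z,w) ∈ 𝕋² with (z,w) ≠ (1,1), while rank Φ(1,1) = 1. Consequently the crystal framework of Table 5 of the paper, whose symbol is Φ, has RUM spectrum Ω(C) = {(1,1)} yet admits nontrivial strictly periodic infinitesimal flexes, since the kernel of Φ(1,1) has dimension 3 > 2. -/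

import Mathlib

open Filter

noncomputable section

/-- The multi-power `z^k = z₁^{k₁} ⋯ z_d^{k_d}` for `z ∈ ℂ^d`, `k ∈ ℤ^d`. -/
def zpowVec {d : ℕ} (z : Fin d → ℂ) (k : Fin d → ℤ) : ℂ := ∏ j, z j ^ (k j)

/-- Membership in the `d`-torus `𝕋^d`. -/
def OnTorus {d : ℕ} (z : Fin d → ℂ) : Prop := ∀ j, ‖z j‖ = 1

/-- A crystal framework in `ℝ^d`: a finite motif of vertices `V` placed by `p`,
a full-rank translation lattice generated by `a₁, …, a_d`, and a finite set of
motif edges `E` with endpoints `fst e = (v, l)` and `snd e = (w, m)` standing for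
the joints `p(v, l)` and `p(w, m)`.  Joints are pairwise distinct and edge vectors
are nonzero. -/
structure CrystalFramework (d : ℕ) where
  V : Type
  fintypeV : Fintype V
  decV : DecidableEq V
  E : Type
  fintypeE : Fintype E
  p : V → Fin d → ℝ
  a : Fin d → Fin d → ℝ
  indep : LinearIndependent ℝ a
  fst : E → V × (Fin d → ℤ)
  snd : E → V × (Fin d → ℤ)
  joint_injective : Function.Injective
    (fun vk : V × (Fin d → ℤ) =>
      (fun i => p vk.1 i + ∑ j, (vk.2 j : ℝ) * a j i : Fin d → ℝ))
  edge_nonzero : ∀ e : E,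
    (fun i => p (fst e).1 i + ∑ j, ((fst e).2 j : ℝ) * a j i : Fin d → ℝ) ≠
    (fun i => p (snd e).1 i + ∑ j, ((snd e).2 j : ℝ) * a j i)

attribute [instance] CrystalFramework.fintypeV CrystalFramework.decV CrystalFramework.fintypeE

namespace CrystalFramework

variable {d : ℕ} (C : CrystalFramework d)

/-- The joint `p(v, k) = p(v) + k₁a₁ + ⋯ + k_d a_d`. -/
def joint (v : C.V) (k : Fin d → ℤ) : Fin d → ℝ :=
  fun i => C.p v i + ∑ j, (k j : ℝ) * C.a j i

/-- The edge vector `p(e) = p(v, l) - p(w, m)` for the motif edge `e = ((v,l),(w,m))`. -/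
def edgeVec (e : C.E) : Fin d → ℝ :=
  fun i => C.joint (C.fst e).1 (C.fst e).2 i - C.joint (C.snd e).1 (C.snd e).2 i

/-- A complex velocity field `u` is an infinitesimal flex:
`p(e) ⋅ (u(v, l+k) - u(w, m+k)) = 0` for every motif edge and every `k ∈ ℤ^d`. -/
def IsFlex (u : C.V × (Fin d → ℤ) → Fin d → ℂ) : Prop :=
  ∀ (e : C.E) (k : Fin d → ℤ),
    ∑ i, (C.edgeVec e i : ℂ) *
      (u ((C.fst e).1, fun j => (C.fst e).2 j + k j) i -
       u ((C.snd e).1, fun j => (C.snd e).2 j + k j) i) = 0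

/-- A real velocity field `u` is an infinitesimal flex. -/
def IsRealFlex (u : C.V × (Fin d → ℤ) → Fin d → ℝ) : Prop :=
  ∀ (e : C.E) (k : Fin d → ℤ),
    ∑ i, C.edgeVec e i *
      (u ((C.fst e).1, fun j => (C.fst e).2 j + k j) i -
       u ((C.snd e).1, fun j => (C.snd e).2 j + k j) i) = 0

/-- A complex velocity field is trivial if the flex condition holds for every pair of joints. -/
def IsTrivial (u : C.V × (Fin d → ℤ) → Fin d → ℂ) : Prop :=
  ∀ (v w : C.V) (k k' : Fin d → ℤ),
    ∑ i, ((C.joint v k i - C.joint w k' i : ℝ) : ℂ) * (u (v, k) i - u (w, k') i) = 0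

/-- A real velocity field is trivial if the flex condition holds for every pair of joints. -/
def IsRealTrivial (u : C.V × (Fin d → ℤ) → Fin d → ℝ) : Prop :=
  ∀ (v w : C.V) (k k' : Fin d → ℤ),
    ∑ i, (C.joint v k i - C.joint w k' i) * (u (v, k) i - u (w, k') i) = 0

/-- A complex velocity field is strictly periodic if `u(v,k) = u(v,0)`. -/
def StrictlyPeriodic (u : C.V × (Fin d → ℤ) → Fin d → ℂ) : Prop :=
  ∀ (v : C.V) (k : Fin d → ℤ), u (v, k) = u (v, 0)

/-- A real velocity field is strictly periodic if `u(v,k) = u(v,0)`. -/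
def StrictlyPeriodicReal (u : C.V × (Fin d → ℤ) → Fin d → ℝ) : Prop :=
  ∀ (v : C.V) (k : Fin d → ℤ), u (v, k) = u (v, 0)

/-- The `ω`-phase-periodic velocity field `b ⊗ e_ω : (v,k) ↦ ω^k b(v)`. -/
def phaseField (ω : Fin d → ℂ) (b : C.V → Fin d → ℂ) :
    C.V × (Fin d → ℤ) → Fin d → ℂ :=
  fun vk i => zpowVec ω vk.2 * b vk.1 i

/-- The symbol function `Φ_C(z)`: the row of the motif edge `e = ((v,l),(w,m))` has
entries `z̄^l p(e)` in the columns of `v` and `-z̄^m p(e)` in the columns of `w`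
(in particular entries `(z̄^l - z̄^m) p(e)` in the columns of `v` when `v = w`). -/
def symbol (z : Fin d → ℂ) : Matrix C.E (C.V × Fin d) ℂ :=
  Matrix.of fun e xi =>
    (C.edgeVec e xi.2 : ℂ) *
      ((if xi.1 = (C.fst e).1 then
          zpowVec (fun j => (starRingEnd ℂ) (z j)) (C.fst e).2 else 0) -
       (if xi.1 = (C.snd e).1 then
          zpowVec (fun j => (starRingEnd ℂ) (z j)) (C.snd e).2 else 0))

/-- The RUM spectrum `Ω(C)`: the set of `ω ∈ 𝕋^d` admitting a nonzero
`ω`-phase-periodic infinitesimal flex. -/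
def RUM : Set (Fin d → ℂ) :=
  {ω | OnTorus ω ∧ ∃ b : C.V → Fin d → ℂ, b ≠ 0 ∧ C.IsFlex (C.phaseField ω b)}

end CrystalFramework

/-!
For the explicit matrix everything is elimination: the three rows in the columns of one motif
vertex say `(z̄ - 1) a = 0`, `(w̄ - 1) b = 0` and `(z̄ - w̄)(a - b) = 0`, which force `a = b = 0`
unless `z̄ = w̄ = 1`; at `(1, 1)` only the first row `(-1, 1, 1, -1) / 2` survives.

For a phase vector `ω` with nonzero entries, the flex condition of `b ⊗ e_ω` at the edge `e` and
translate `k` is `ω^k` times the `e`-th entry of `Φ_C(ω̄) b`, so `Ω(C)` is the set of torus points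
where `Φ_C(ω̄)` has a nonzero kernel vector; reindexing vertices and edges identifies this kernel
with that of `Φ`. The kernel vector `(1, 1, 0, 0)` of `Φ(1, 1)` moves one motif vertex diagonally
and keeps the other fixed. It is not trivial: a trivial strictly periodic field is a translation,
because the lattice vectors `a₁, a₂` span `ℝ²`.
-/

open Matrix Module

theorem zpowVec_add {d : ℕ} {ω : Fin d → ℂ} (hω : ∀ j, ω j ≠ 0) (l k : Fin d → ℤ) :
    zpowVec ω (l + k) = zpowVec ω l * zpowVec ω k := by
  simp only [zpowVec, Pi.add_apply, zpow_add₀ (hω _), Finset.prod_mul_distrib]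

@[simp]
theorem zpowVec_zero {d : ℕ} (ω : Fin d → ℂ) : zpowVec ω 0 = 1 := by
  simp [zpowVec]

@[simp]
theorem one_zpowVec {d : ℕ} (k : Fin d → ℤ) : zpowVec 1 k = 1 := by
  simp [zpowVec]

theorem OnTorus.ne_zero {d : ℕ} {ω : Fin d → ℂ} (hω : OnTorus ω) (j : Fin d) : ω j ≠ 0 :=
  norm_ne_zero_iff.mp ((hω j).symm ▸ one_ne_zero)

namespace CrystalFramework

variable {d : ℕ} (C : CrystalFramework d)

theorem symbol_conj_mulVec (ω : Fin d → ℂ) (b : C.V → Fin d → ℂ) (e : C.E) :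
    (C.symbol (fun j => starRingEnd ℂ (ω j)) *ᵥ Function.uncurry b) e =
      zpowVec ω (C.fst e).2 * ∑ i, (C.edgeVec e i : ℂ) * b (C.fst e).1 i -
        zpowVec ω (C.snd e).2 * ∑ i, (C.edgeVec e i : ℂ) * b (C.snd e).1 i := by
  simp only [mulVec, dotProduct, symbol, of_apply, Complex.conj_conj, Fintype.sum_prod_type_right,
    Function.uncurry_apply_pair, mul_sub, sub_mul, Finset.sum_sub_distrib, mul_ite, ite_mul,
    mul_zero, zero_mul, Finset.sum_ite_eq', Finset.mem_univ, if_true, Finset.mul_sum]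
  congr 1 <;> exact Finset.sum_congr rfl fun i _ => by ring

theorem isFlex_phaseField_iff {ω : Fin d → ℂ} (hω : ∀ j, ω j ≠ 0) (b : C.V → Fin d → ℂ) :
    C.IsFlex (C.phaseField ω b) ↔
      C.symbol (fun j => starRingEnd ℂ (ω j)) *ᵥ Function.uncurry b = 0 := by
  have flex_eq : ∀ e k, ∑ i, (C.edgeVec e i : ℂ) *
      (C.phaseField ω b ((C.fst e).1, fun j => (C.fst e).2 j + k j) i -
        C.phaseField ω b ((C.snd e).1, fun j => (C.snd e).2 j + k j) i) =
      zpowVec ω k * (C.symbol (fun j => starRingEnd ℂ (ω j)) *ᵥ Function.uncurry b) e := by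
    intro e k
    rw [symbol_conj_mulVec]
    simp only [phaseField, ← Pi.add_def, zpowVec_add hω, mul_sub, Finset.mul_sum,
      ← Finset.sum_sub_distrib]
    exact Finset.sum_congr rfl fun i _ => by ring
  simp only [IsFlex, flex_eq, funext_iff, Pi.zero_apply]
  exact ⟨fun h e => by simpa using h e 0, fun h e k => by simp [h e]⟩

theorem mem_RUM_iff (ω : Fin d → ℂ) :
    ω ∈ C.RUM ↔ OnTorus ω ∧
      ∃ v : C.V × Fin d → ℂ, v ≠ 0 ∧ C.symbol (fun j => starRingEnd ℂ (ω j)) *ᵥ v = 0 := by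
  refine and_congr_right fun hω => ?_
  simp only [C.isFlex_phaseField_iff hω.ne_zero]
  refine ⟨fun ⟨b, hb, hflex⟩ => ⟨Function.uncurry b, ?_, hflex⟩,
    fun ⟨v, hv, hker⟩ => ⟨Function.curry v, ?_, by rwa [Function.uncurry_curry]⟩⟩
  · exact fun h => hb (by rw [← Function.curry_uncurry b, h]; rfl)
  · exact fun h => hv (by rw [← Function.uncurry_curry v, h]; rfl)

theorem isFlex_const_iff (b : C.V → Fin d → ℂ) :
    C.IsFlex (fun vk => b vk.1) ↔ C.symbol (fun _ => 1) *ᵥ Function.uncurry b = 0 := by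
  have hconst : C.phaseField 1 b = fun vk => b vk.1 := by
    funext vk i
    simp [phaseField]
  simpa [hconst] using C.isFlex_phaseField_iff (ω := 1) (fun _ => one_ne_zero) b

theorem joint_sub_joint_zero (v : C.V) (k : Fin d → ℤ) (i : Fin d) :
    C.joint v k i - C.joint v 0 i = ∑ j, (k j : ℝ) * C.a j i := by
  simp [joint]

variable {C} in
theorem IsTrivial.apply_eq_of_strictlyPeriodic {u : C.V × (Fin d → ℤ) → Fin d → ℂ}
    (ht : C.IsTrivial u) (hp : C.StrictlyPeriodic u) (v w : C.V) : u (v, 0) = u (w, 0) := by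
  set δ := u (v, 0) - u (w, 0)
  -- subtracting the triviality conditions for the pairs `(v, k), (w, 0)` and `(v, 0), (w, 0)`
  have hlattice : ∀ k : Fin d → ℤ, ∑ i, ((∑ j, (k j : ℝ) * C.a j i : ℝ) : ℂ) * δ i = 0 := by
    intro k
    have hk := ht v w k 0
    have h0 := ht v w 0 0
    rw [hp v k] at hk
    rw [← sub_eq_zero.mpr (hk.trans h0.symm), ← Finset.sum_sub_distrib]
    refine Finset.sum_congr rfl fun i _ => ?_
    rw [← joint_sub_joint_zero, Complex.ofReal_sub, Complex.ofReal_sub, Complex.ofReal_sub]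
    simp only [δ, Pi.sub_apply]
    ring
  have hrows : (Matrix.of C.a).map ((↑) : ℝ → ℂ) *ᵥ δ = 0 := by
    funext j
    simpa [Pi.single_apply, mulVec, dotProduct] using hlattice (Pi.single j 1)
  have hunit : IsUnit ((Matrix.of C.a).map ((↑) : ℝ → ℂ)) :=
    (linearIndependent_rows_iff_isUnit.mp C.indep).map Complex.ofRealHom.mapMatrix
  exact sub_eq_zero.mp <| mulVec_injective_iff_isUnit.mpr hunit (hrows.trans (mulVec_zero _).symm)

end CrystalFramework

theorem Matrix.rank_add_finrank_ker_mulVecLin {K m n : Type*} [Field K] [Fintype n]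
    [DecidableEq n] (A : Matrix m n K) :
    A.rank + finrank K (LinearMap.ker A.mulVecLin) = Fintype.card n := by
  have h := LinearMap.finrank_range_add_finrank_ker A.mulVecLin
  rw [finrank_fintype_fun_eq_card] at h
  exact h

theorem Matrix.exists_ne_zero_submatrix_mulVec_eq_zero_iff {R l m n o : Type*} [Semiring R]
    [Fintype n] [Fintype o] (M : Matrix m n R) (e₁ : l ≃ m) (e₂ : o ≃ n) :
    (∃ v ≠ 0, M.submatrix e₁ e₂ *ᵥ v = 0) ↔ ∃ c ≠ 0, M *ᵥ c = 0 := by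
  have h₁ : ∀ f : m → R, f ∘ e₁ = 0 ↔ f = 0 := fun f =>
    e₁.surjective.injective_comp_right.eq_iff' rfl
  simp only [submatrix_mulVec_equiv, h₁]
  refine ⟨fun ⟨v, hv, h⟩ => ⟨v ∘ e₂.symm, fun h' => hv ?_, h⟩,
    fun ⟨c, hc, h⟩ => ⟨c ∘ e₂, fun h' => hc ?_, by simpa [Function.comp_assoc] using h⟩⟩
  · exact e₂.symm.surjective.injective_comp_right h'
  · exact e₂.surjective.injective_comp_right h'

theorem eq_zero_and_eq_zero_of_mul_eq_zero {R : Type*} [CommRing R] [NoZeroDivisors R]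
    {ζ ξ a b : R} (hζξ : ζ ≠ 1 ∨ ξ ≠ 1) (ha : (ζ - 1) * a = 0) (hb : (ξ - 1) * b = 0)
    (hab : (ζ - ξ) * (a - b) = 0) : a = 0 ∧ b = 0 := by
  have key : ∀ {ζ ξ a b : R}, ζ ≠ 1 → (ζ - 1) * a = 0 → (ξ - 1) * b = 0 →
      (ζ - ξ) * (a - b) = 0 → a = 0 ∧ b = 0 := by
    intro ζ ξ a b hζ ha hb hab
    obtain rfl : a = 0 := (mul_eq_zero.mp ha).resolve_left (sub_ne_zero.mpr hζ)
    refine ⟨rfl, ?_⟩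
    rcases mul_eq_zero.mp hab with h | h
    · rw [← sub_eq_zero.mp h] at hb
      exact (mul_eq_zero.mp hb).resolve_left (sub_ne_zero.mpr hζ)
    · simpa using h
  rcases hζξ with hζ | hξ
  · exact key hζ ha hb hab
  · exact (key hξ hb ha (by linear_combination hab)).symm

/-- The matrix `Φ` of the statement in the conjugate variables: `Φ(z, w) = exampleSymbol z̄ w̄`. -/
def exampleSymbol (ζ ξ : ℂ) : Matrix (Fin 7) (Fin 4) ℂ :=
  !![-(1 / 2), 1 / 2, 1 / 2, -(1 / 2);
     ζ - 1, 0, 0, 0;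
     0, ξ - 1, 0, 0;
     ζ - ξ, ξ - ζ, 0, 0;
     0, 0, ζ - 1, 0;
     0, 0, 0, ξ - 1;
     0, 0, ζ - ξ, ξ - ζ]

theorem exampleSymbol_mulVec_eq_zero_iff (ζ ξ : ℂ) (c : Fin 4 → ℂ) :
    exampleSymbol ζ ξ *ᵥ c = 0 ↔ c 0 + c 3 = c 1 + c 2 ∧
      ((ζ - 1) * c 0 = 0 ∧ (ξ - 1) * c 1 = 0 ∧ (ζ - ξ) * (c 0 - c 1) = 0) ∧
      ((ζ - 1) * c 2 = 0 ∧ (ξ - 1) * c 3 = 0 ∧ (ζ - ξ) * (c 2 - c 3) = 0) := by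
  simp only [exampleSymbol, cons_mulVec, cons_dotProduct, vecHead, vecTail, Function.comp_apply,
    Fin.succ_zero_eq_one, Fin.succ_one_eq_two, Fin.reduceSucc, dotProduct_of_isEmpty, add_zero,
    zero_mul, zero_add, empty_mulVec, funext_iff, Pi.zero_apply, Fin.forall_fin_succ,
    cons_val_zero, cons_val_succ, cons_val_fin_one, forall_const]
  have row0 : -(1 / 2) * c 0 + (1 / 2 * c 1 + (1 / 2 * c 2 + -(1 / 2) * c 3)) = 0 ↔
      c 0 + c 3 = c 1 + c 2 :=
    ⟨fun h => by linear_combination (-2) * h, fun h => by linear_combination (-1 / 2) * h⟩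
  have antisymm_row : ∀ a b, (ζ - ξ) * a + (ξ - ζ) * b = (ζ - ξ) * (a - b) := fun a b => by ring
  rw [row0, antisymm_row, antisymm_row]
  tauto

theorem exampleSymbol_mulVec_eq_zero {ζ ξ : ℂ} (hζξ : ζ ≠ 1 ∨ ξ ≠ 1) {c : Fin 4 → ℂ}
    (hc : exampleSymbol ζ ξ *ᵥ c = 0) : c = 0 := by
  obtain ⟨-, ⟨h0, h1, h01⟩, h2, h3, h23⟩ := (exampleSymbol_mulVec_eq_zero_iff ζ ξ c).mp hc
  obtain ⟨hc0, hc1⟩ := eq_zero_and_eq_zero_of_mul_eq_zero hζξ h0 h1 h01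
  obtain ⟨hc2, hc3⟩ := eq_zero_and_eq_zero_of_mul_eq_zero hζξ h2 h3 h23
  ext i
  fin_cases i <;> assumption

theorem rank_exampleSymbol {ζ ξ : ℂ} (hζξ : ζ ≠ 1 ∨ ξ ≠ 1) : (exampleSymbol ζ ξ).rank = 4 := by
  have hker : LinearMap.ker (exampleSymbol ζ ξ).mulVecLin = ⊥ :=
    ker_mulVecLin_eq_bot_iff.mpr fun _ => exampleSymbol_mulVec_eq_zero hζξ
  have := (exampleSymbol ζ ξ).rank_add_finrank_ker_mulVecLin
  rwa [hker, finrank_bot, add_zero, Fintype.card_fin] at this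

theorem exampleSymbol_one_one_mulVec (c : Fin 4 → ℂ) :
    exampleSymbol 1 1 *ᵥ c = Pi.single 0 ((c 1 + c 2 - c 0 - c 3) / 2) := by
  ext i
  fin_cases i <;> simp [exampleSymbol, vecHead, vecTail]
  ring

theorem finrank_ker_exampleSymbol_one_one :
    finrank ℂ (LinearMap.ker (exampleSymbol 1 1).mulVecLin) = 3 := by
  set f : Module.Dual ℂ (Fin 4 → ℂ) := (LinearMap.proj 0).comp (exampleSymbol 1 1).mulVecLin
  have hker : LinearMap.ker (exampleSymbol 1 1).mulVecLin = LinearMap.ker f := by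
    ext c
    simp [f, exampleSymbol_one_one_mulVec]
  have hf : f ≠ 0 := fun h => by
    simpa [f, exampleSymbol] using LinearMap.congr_fun h (Pi.single 1 2)
  have := Module.Dual.finrank_ker_add_one_of_ne_zero hf
  rw [hker]
  simp only [finrank_fintype_fun_eq_card, Fintype.card_fin] at this
  omega

theorem rank_exampleSymbol_one_one : (exampleSymbol 1 1).rank = 1 := by
  have := (exampleSymbol 1 1).rank_add_finrank_ker_mulVecLin
  rw [finrank_ker_exampleSymbol_one_one, Fintype.card_fin] at this
  omega

theorem exists_ne_zero_exampleSymbol_mulVec_eq_zero_iff (ζ ξ : ℂ) :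
    (∃ c ≠ 0, exampleSymbol ζ ξ *ᵥ c = 0) ↔ ζ = 1 ∧ ξ = 1 := by
  refine ⟨fun ⟨c, hc, hker⟩ => ?_, ?_⟩
  · by_contra h
    exact hc (exampleSymbol_mulVec_eq_zero (not_and_or.mp h) hker)
  · rintro ⟨rfl, rfl⟩
    refine ⟨![1, 1, 0, 0], fun h => by simpa using congrFun h 0, ?_⟩
    rw [exampleSymbol_one_one_mulVec]
    simp

def vertexCoordEquiv {V : Type} (eV : V ≃ Fin 2) : V × Fin 2 ≃ Fin 4 :=
  (eV.prodCongr (Equiv.refl _)).trans finProdFinEquiv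

theorem vertexCoordEquiv_apply_val {V : Type} (eV : V ≃ Fin 2) (x : V) (i : Fin 2) :
    (vertexCoordEquiv eV (x, i) : ℕ) = 2 * (eV x : ℕ) + i := by
  simp [vertexCoordEquiv, finProdFinEquiv, add_comm]

namespace CrystalFramework

variable (C : CrystalFramework 2)

def HasExampleSymbol (eV : C.V ≃ Fin 2) (eE : C.E ≃ Fin 7) : Prop :=
  ∀ ζ ξ : ℂ, ‖ζ‖ = 1 → ‖ξ‖ = 1 → C.symbol ![starRingEnd ℂ ζ, starRingEnd ℂ ξ] =
    (exampleSymbol ζ ξ).submatrix eE (vertexCoordEquiv eV)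

variable {C} {eV : C.V ≃ Fin 2} {eE : C.E ≃ Fin 7}

theorem HasExampleSymbol.symbol_conj_eq (h : C.HasExampleSymbol eV eE) {ω : Fin 2 → ℂ}
    (hω : OnTorus ω) : C.symbol (fun j => starRingEnd ℂ (ω j)) =
      (exampleSymbol (ω 0) (ω 1)).submatrix eE (vertexCoordEquiv eV) := by
  have hvec : (fun j => starRingEnd ℂ (ω j)) = ![starRingEnd ℂ (ω 0), starRingEnd ℂ (ω 1)] := by
    funext j
    fin_cases j <;> rfl
  rw [hvec]
  exact h _ _ (hω 0) (hω 1)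

theorem HasExampleSymbol.RUM_eq_singleton (h : C.HasExampleSymbol eV eE) :
    C.RUM = {![1, 1]} := by
  ext ω
  rw [mem_RUM_iff, Set.mem_singleton_iff]
  constructor
  · rintro ⟨hω, hker⟩
    rw [h.symbol_conj_eq hω, exists_ne_zero_submatrix_mulVec_eq_zero_iff,
      exists_ne_zero_exampleSymbol_mulVec_eq_zero_iff] at hker
    ext j
    fin_cases j
    exacts [hker.1, hker.2]
  · rintro rfl
    have hω : OnTorus ![(1 : ℂ), 1] := fun j => by fin_cases j <;> simp
    refine ⟨hω, ?_⟩
    rw [h.symbol_conj_eq hω, exists_ne_zero_submatrix_mulVec_eq_zero_iff,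
      exists_ne_zero_exampleSymbol_mulVec_eq_zero_iff]
    simp

theorem HasExampleSymbol.exists_strictlyPeriodic_isFlex_not_isTrivial
    (h : C.HasExampleSymbol eV eE) :
    ∃ u : C.V × (Fin 2 → ℤ) → Fin 2 → ℂ,
      C.StrictlyPeriodic u ∧ C.IsFlex u ∧ ¬ C.IsTrivial u := by
  set c : Fin 4 → ℂ := ![1, 1, 0, 0]
  set b : C.V → Fin 2 → ℂ := fun x i => c (vertexCoordEquiv eV (x, i))
  refine ⟨fun vk => b vk.1, fun _ _ => rfl, ?_, fun ht => ?_⟩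
  · have hone : (fun _ => 1 : Fin 2 → ℂ) = fun j => starRingEnd ℂ (![1, 1] j) := by
      funext j
      fin_cases j <;> simp
    have hc : Function.uncurry b ∘ (vertexCoordEquiv eV).symm = c := by
      funext n
      simp [b, Function.uncurry_def]
    rw [isFlex_const_iff, hone, h.symbol_conj_eq (fun j => by fin_cases j <;> simp),
      submatrix_mulVec_equiv, hc]
    simp [c, exampleSymbol_one_one_mulVec]
  · have htranslation :=
      ht.apply_eq_of_strictlyPeriodic (fun _ _ => rfl) (eV.symm 0) (eV.symm 1)
    simpa [b, c, vertexCoordEquiv, finProdFinEquiv] using congrFun htranslation 0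

end CrystalFramework

/-- For the given `7 × 4` symbol matrix `Φ`: `rank Φ(z,w) = 4` at
every point of `𝕋²` other than `(1,1)`, while `rank Φ(1,1) = 1`; consequently any
crystal framework with this symbol has RUM spectrum `{(1,1)}` yet admits nontrivial
strictly periodic infinitesimal flexes, the kernel of `Φ(1,1)` having dimension
`3 > 2`. -/
theorem RUM_singleton_with_nontrivial_periodic_flex
    (Φ : ℂ → ℂ → Matrix (Fin 7) (Fin 4) ℂ)
    (hΦ : ∀ z w : ℂ, Φ z w =
      !![-(1 / 2 : ℂ), 1 / 2, 1 / 2, -(1 / 2 : ℂ);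
         (starRingEnd ℂ) z - 1, 0, 0, 0;
         0, (starRingEnd ℂ) w - 1, 0, 0;
         (starRingEnd ℂ) z - (starRingEnd ℂ) w, (starRingEnd ℂ) w - (starRingEnd ℂ) z, 0, 0;
         0, 0, (starRingEnd ℂ) z - 1, 0;
         0, 0, 0, (starRingEnd ℂ) w - 1;
         0, 0, (starRingEnd ℂ) z - (starRingEnd ℂ) w, (starRingEnd ℂ) w - (starRingEnd ℂ) z])
    (C : CrystalFramework 2) (eV : C.V ≃ Fin 2) (eE : C.E ≃ Fin 7)
    (hsym : ∀ z w : ℂ, ‖z‖ = 1 → ‖w‖ = 1 →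
      ∀ (e : C.E) (x : C.V) (i : Fin 2),
        C.symbol ![z, w] e (x, i) =
          Φ z w (eE e)
            ⟨2 * ((eV x : Fin 2) : ℕ) + (i : ℕ),
              by have h1 := (eV x).isLt; have h2 := i.isLt; omega⟩) :
    (∀ z w : ℂ, ‖z‖ = 1 → ‖w‖ = 1 → ¬(z = 1 ∧ w = 1) →
      (Φ z w).rank = 4) ∧
    (Φ 1 1).rank = 1 ∧
    Module.finrank ℂ (LinearMap.ker (Φ 1 1).mulVecLin) = 3 ∧
    C.RUM = ({![1, 1]} : Set (Fin 2 → ℂ)) ∧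
    ∃ u : C.V × (Fin 2 → ℤ) → Fin 2 → ℂ,
      C.StrictlyPeriodic u ∧ C.IsFlex u ∧ ¬ C.IsTrivial u := by
  have hΦ' : ∀ z w, Φ z w = exampleSymbol (starRingEnd ℂ z) (starRingEnd ℂ w) := hΦ
  have hΦ₁ : Φ 1 1 = exampleSymbol 1 1 := by rw [hΦ', map_one]
  have hC : C.HasExampleSymbol eV eE := by
    intro ζ ξ hζ hξ
    ext e ⟨x, i⟩
    rw [hsym _ _ (by rwa [Complex.norm_conj]) (by rwa [Complex.norm_conj]), hΦ',
      Complex.conj_conj, Complex.conj_conj, submatrix_apply]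
    exact congrArg _ (Fin.ext (vertexCoordEquiv_apply_val eV x i).symm)
  refine ⟨fun z w _ _ hzw => ?_, by rw [hΦ₁, rank_exampleSymbol_one_one],
    by rw [hΦ₁, finrank_ker_exampleSymbol_one_one], hC.RUM_eq_singleton,
    hC.exists_strictlyPeriodic_isFlex_not_isTrivial⟩
  rw [hΦ', rank_exampleSymbol]
  rwa [← not_and_or, map_eq_one_iff _ (RingHom.injective _),
    map_eq_one_iff _ (RingHom.injective _)]
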